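/- (Properties of the cosine model space.) The set J(ℱ), equipped with the subspace topology induced from τ_ℳ, is a locally compact, Hausdorff, second-countable topological space; consequently its one-point compactification J(ℱ) ∪ {∞} is a first-countable, hence sequential, space. -/

import Mathlib

/-!
The cyclic order topology on addresses is the product topology of the discrete alphabet
`ℤ × {L,R}`: whether `s <ₗ t` holds is decided by finitely many symbols of `s` and `t`, and
perturbing `s` at index `n + 1` yields a cyclic interval around `s` inside the cylinder of
sequences agreeing with `s` up to index `n`. Hence `ℳ` is Hausdorff and second countable, `ℱ` is
continuous and `J(ℱ)` is closed.

If `x = (t, s) ∈ J(ℱ)` and `t ≤ b`, then `T(ℱᵏ(x)) ≤ expᵏ(b)`, and `T(ℱᵏ⁺¹(x)) ≥ 0` forces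
`|s_{k+1}| ≤ expᵏ⁺¹(b)`. So the points of `J(ℱ)` with `T ≤ b` and a fixed first symbol form
a closed subset of `[0, b]` times a product of finite sets, which is compact by Tychonoff, and
`J(ℱ)` is locally compact. Being also σ-compact, it admits a countable compact exhaustion, whose
complements form a countable neighbourhood basis of `∞` in the one-point compactification.
-/

/-- The space of external addresses `(ℤ × {L,R})^ℕ`, with `L, R` encoded by
`false, true : Bool`. -/
def CSeq : Type := ℕ → ℤ × Bool

/-- The linear order on `ℤ × {L,R}`: `(n,*) < (m,⋆)` iff `* = ⋆ = R` and `n < m`,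
or `* = ⋆ = L` and `m < n`, or `* = L` and `⋆ = R`. -/
def symbLt : ℤ × Bool → ℤ × Bool → Prop := fun p q =>
  (p.2 = true ∧ q.2 = true ∧ p.1 < q.1) ∨
    (p.2 = false ∧ q.2 = false ∧ q.1 < p.1) ∨
    (p.2 = false ∧ q.2 = true)

/-- The induced lexicographic order `<ₗ` on `(ℤ × {L,R})^ℕ`. -/
def lexLt (s t : CSeq) : Prop :=
  ∃ n : ℕ, (∀ k < n, s k = t k) ∧ symbLt (s n) (t n)

/-- The cyclic order `[s, a, t]` induced by `<ₗ`. -/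
def cycBtw (s a t : CSeq) : Prop :=
  (lexLt s a ∧ lexLt a t) ∨ (lexLt a t ∧ lexLt t s) ∨ (lexLt t s ∧ lexLt s a)

/-- The open interval `(s, t)` of the cyclic order. -/
def cycInterval (s t : CSeq) : Set CSeq := {x | cycBtw s x t}

/-- The cyclic order topology on `(ℤ × {L,R})^ℕ`, generated by the open
intervals of the cyclic order. -/
instance : TopologicalSpace CSeq :=
  TopologicalSpace.generateFrom {I | ∃ s t : CSeq, I = cycInterval s t}

/-- The model map `ℱ(t,s) = (e^t − 1 − 2π|s₁|, σ(s))`, where `σ` is the one-sided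
shift and `|s₁|` is the absolute value of the integer part of the second entry
of `s`. -/
noncomputable def modelF : ℝ × CSeq → ℝ × CSeq := fun p =>
  (Real.exp p.1 - 1 - 2 * Real.pi * |(((p.2 1).1 : ℤ) : ℝ)|, fun n => p.2 (n + 1))

/-- The model Julia set `J(ℱ) = {x ∈ ℳ : T(ℱⁿ(x)) ≥ 0 for all n ≥ 0}` (the
condition for `n = 0` says exactly that the first coordinate lies in `[0,∞)`). -/
def modelJ : Set (ℝ × CSeq) := {p | ∀ n : ℕ, 0 ≤ (modelF^[n] p).1}


open Set Filter Topology Real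

lemma symbLt_irrefl (p : ℤ × Bool) : ¬ symbLt p p := by
  rcases p with ⟨n, _ | _⟩ <;> simp [symbLt]

lemma symbLt_asymm {p q : ℤ × Bool} (h : symbLt p q) : ¬ symbLt q p := by
  rcases p with ⟨n, _ | _⟩ <;> rcases q with ⟨m, _ | _⟩ <;> simp [symbLt] at h ⊢ <;> omega

lemma exists_symbLt_symbLt (q : ℤ × Bool) : ∃ p r, symbLt p q ∧ symbLt q r ∧ symbLt p r := by
  rcases q with ⟨n, _ | _⟩
  · exact ⟨(n + 1, false), (n - 1, false), by simp [symbLt]⟩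
  · exact ⟨(n - 1, true), (n + 1, true), by simp [symbLt]⟩

lemma lexLt_asymm {s t : CSeq} (h : lexLt s t) : ¬ lexLt t s := by
  rintro ⟨m', h', hs'⟩
  obtain ⟨m, h, hs⟩ := h
  rcases lt_trichotomy m m' with hlt | rfl | hlt
  · rw [h' m hlt] at hs; exact symbLt_irrefl _ hs
  · exact symbLt_asymm hs hs'
  · rw [h m' hlt] at hs'; exact symbLt_irrefl _ hs'

lemma lexLt_of_eqOn {s t s' t' : CSeq} {m : ℕ} (hst : (∀ k < m, s k = t k) ∧ symbLt (s m) (t m))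
    (hs : ∀ k ≤ m, s' k = s k) (ht : ∀ k ≤ m, t' k = t k) : lexLt s' t' :=
  ⟨m, fun k hk => by rw [hs k hk.le, ht k hk.le, hst.1 k hk],
    by rw [hs m le_rfl, ht m le_rfl]; exact hst.2⟩

lemma eqOn_of_lexLt_of_lexLt {a x b : CSeq} {m : ℕ} (hab : ∀ k < m, a k = b k)
    (hax : lexLt a x) (hxb : lexLt x b) : ∀ k < m, x k = a k := by
  obtain ⟨m₁, h₁, hs₁⟩ := hax
  obtain ⟨m₂, h₂, hs₂⟩ := hxb
  suffices m ≤ m₁ from fun k hk => (h₁ k (by omega)).symm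
  by_contra! hm₁
  rcases lt_trichotomy m₂ m₁ with hlt | rfl | hlt
  · rw [← h₁ m₂ hlt, hab m₂ (by omega)] at hs₂; exact symbLt_irrefl _ hs₂
  · rw [← hab m₂ hm₁] at hs₂; exact symbLt_asymm hs₁ hs₂
  · rw [h₂ m₁ hlt, ← hab m₁ hm₁] at hs₁; exact symbLt_irrefl _ hs₁

lemma cycBtw_iff_of_lexLt {a b : CSeq} (hab : lexLt a b) (x : CSeq) :
    cycBtw a x b ↔ lexLt a x ∧ lexLt x b := by
  have := lexLt_asymm hab
  unfold cycBtw
  tauto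

lemma exists_cycInterval_subset (x : CSeq) (n : ℕ) :
    ∃ a b, x ∈ cycInterval a b ∧ cycInterval a b ⊆ {y | y n = x n} := by
  obtain ⟨p, r, hpx, hxr, hpr⟩ := exists_symbLt_symbLt (x (n + 1))
  set a := Function.update x (n + 1) p
  set b := Function.update x (n + 1) r
  have ha : ∀ k < n + 1, a k = x k := fun k hk => Function.update_of_ne hk.ne _ _
  have hb : ∀ k < n + 1, b k = x k := fun k hk => Function.update_of_ne hk.ne _ _
  have ha' : a (n + 1) = p := Function.update_self _ _ _
  have hb' : b (n + 1) = r := Function.update_self _ _ _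
  have hab : lexLt a b := ⟨n + 1, fun k hk => by rw [ha k hk, hb k hk], by rwa [ha', hb']⟩
  refine ⟨a, b, (cycBtw_iff_of_lexLt hab x).2 ⟨⟨n + 1, ha, by rwa [ha']⟩,
    ⟨n + 1, fun k hk => (hb k hk).symm, by rwa [hb']⟩⟩, fun y hy => ?_⟩
  obtain ⟨hay, hyb⟩ := (cycBtw_iff_of_lexLt hab y).1 hy
  have hy := eqOn_of_lexLt_of_lexLt (fun k hk => by rw [ha k hk, hb k hk]) hay hyb n
    n.lt_succ_self
  rwa [ha n n.lt_succ_self] at hy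

lemma isOpen_lexLt : IsOpen {p : (ℕ → ℤ × Bool) × (ℕ → ℤ × Bool) | lexLt p.1 p.2} := by
  have eventually_eqOn : ∀ (x : ℕ → ℤ × Bool) (m : ℕ), ∀ᶠ y in 𝓝 x, ∀ k ≤ m, y k = x k :=
    fun x m => (eventually_all_finite (finite_Iic m)).2 fun k _ =>
      (continuous_apply k).continuousAt ((isOpen_discrete {x k}).mem_nhds rfl)
  refine isOpen_iff_mem_nhds.2 fun ⟨s, t⟩ ⟨m, hst⟩ => ?_
  exact ((eventually_eqOn s m).prod_nhds (eventually_eqOn t m)).mono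
    fun p hp => lexLt_of_eqOn (m := m) hst hp.1 hp.2

def CSeq.homeomorphPi : CSeq ≃ₜ (ℕ → ℤ × Bool) where
  toEquiv := Equiv.refl _
  continuous_toFun := continuous_pi fun n => continuous_discrete_rng.2 fun c =>
    isOpen_iff_forall_mem_open.2 fun x (hx : x n = c) => by
      obtain ⟨a, b, hx', hsub⟩ := exists_cycInterval_subset x n
      exact ⟨_, fun y hy => (hsub hy).trans hx,
        TopologicalSpace.isOpen_generateFrom_of_mem ⟨a, b, rfl⟩, hx'⟩
  continuous_invFun := continuous_generateFrom_iff.2 <| by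
    rintro _ ⟨a, b, rfl⟩
    have left : IsOpen {x : ℕ → ℤ × Bool | lexLt a x} :=
      isOpen_lexLt.preimage (Continuous.prodMk_right (X := ℕ → ℤ × Bool) (Y := ℕ → ℤ × Bool) a)
    have right : IsOpen {x : ℕ → ℤ × Bool | lexLt x b} :=
      isOpen_lexLt.preimage (Continuous.prodMk_left (X := ℕ → ℤ × Bool) (Y := ℕ → ℤ × Bool) b)
    exact (left.inter right).union ((right.inter isOpen_const).union (isOpen_const.inter left))

instance : T2Space CSeq := CSeq.homeomorphPi.symm.t2Space

instance : SecondCountableTopology CSeq := CSeq.homeomorphPi.secondCountableTopology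

lemma CSeq.continuous_apply (n : ℕ) : Continuous fun s : CSeq => s n :=
  (_root_.continuous_apply n).comp CSeq.homeomorphPi.continuous

lemma CSeq.continuous_of_forall_continuous_apply {X : Type*} [TopologicalSpace X] {f : X → CSeq}
    (h : ∀ n, Continuous fun x => f x n) : Continuous f :=
  CSeq.homeomorphPi.symm.continuous.comp (continuous_pi h)

lemma continuous_modelF : Continuous modelF := by
  have hs₁ : Continuous fun p : ℝ × CSeq => (((p.2 1).1 : ℤ) : ℝ) :=
    continuous_of_discreteTopology.comp
      (continuous_fst.comp ((CSeq.continuous_apply 1).comp continuous_snd))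
  exact ((Real.continuous_exp.comp continuous_fst).sub continuous_const |>.sub
    (continuous_const.mul hs₁.abs)).prodMk (CSeq.continuous_of_forall_continuous_apply fun n =>
      (CSeq.continuous_apply (n + 1)).comp continuous_snd)

lemma isClosed_modelJ : IsClosed modelJ := by
  rw [show modelJ = ⋂ n : ℕ, (fun p => (modelF^[n] p).1) ⁻¹' Ici 0 by ext; simp [modelJ]]
  exact isClosed_iInter fun n => isClosed_Ici.preimage
    (continuous_fst.comp (continuous_modelF.iterate n))

lemma modelF_iterate_snd (p : ℝ × CSeq) (k n : ℕ) : (modelF^[k] p).2 n = p.2 (n + k) := by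
  induction k generalizing n with
  | zero => rfl
  | succ k ih =>
    rw [Function.iterate_succ_apply']
    exact (ih (n + 1)).trans (by rw [Nat.add_right_comm, Nat.add_assoc])

lemma modelF_iterate_succ_fst (p : ℝ × CSeq) (k : ℕ) :
    (modelF^[k + 1] p).1 = Real.exp (modelF^[k] p).1 - 1 - 2 * π * ‖(p.2 (k + 1)).1‖ := by
  rw [Function.iterate_succ_apply', Int.norm_eq_abs, add_comm k 1, ← modelF_iterate_snd]
  rfl

lemma modelF_iterate_fst_le {p : ℝ × CSeq} {b : ℝ} (hb : p.1 ≤ b) (k : ℕ) :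
    (modelF^[k] p).1 ≤ Real.exp^[k] b := by
  induction k with
  | zero => exact hb
  | succ k ih =>
    rw [modelF_iterate_succ_fst, Function.iterate_succ_apply']
    have := Real.exp_le_exp.2 ih
    have : 0 ≤ 2 * π * ‖(p.2 (k + 1)).1‖ := by positivity
    linarith

lemma norm_snd_le_of_mem_modelJ {p : ℝ × CSeq} (hp : p ∈ modelJ) {b : ℝ} (hb : p.1 ≤ b) (k : ℕ) :
    ‖(p.2 (k + 1)).1‖ ≤ Real.exp^[k + 1] b := by
  have hT := hp (k + 1)
  rw [modelF_iterate_succ_fst] at hT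
  rw [Function.iterate_succ_apply']
  have := Real.exp_le_exp.2 (modelF_iterate_fst_le hb k)
  have : ‖(p.2 (k + 1)).1‖ ≤ 2 * π * ‖(p.2 (k + 1)).1‖ :=
    le_mul_of_one_le_left (norm_nonneg _) (by linarith [Real.pi_gt_three])
  linarith

lemma isCompact_setOf_forall_norm_fst_le (B : ℕ → ℝ) :
    IsCompact {s : CSeq | ∀ k, ‖(s k).1‖ ≤ B k} := by
  rw [← CSeq.homeomorphPi.symm.isCompact_preimage]
  have : CSeq.homeomorphPi.symm ⁻¹' {s : CSeq | ∀ k, ‖(s k).1‖ ≤ B k} =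
      univ.pi fun k => Metric.closedBall (0 : ℤ) (B k) ×ˢ univ := by
    ext s
    simp only [Set.mem_pi, mem_univ, mem_prod, Metric.mem_closedBall, dist_zero_right, and_true,
      forall_const]
    rfl
  rw [this]
  exact isCompact_univ_pi fun k => (isCompact_closedBall 0 (B k)).prod isCompact_univ

lemma isCompact_modelJ_inter (b : ℝ) (c : ℤ × Bool) :
    IsCompact (modelJ ∩ {p | p.1 ≤ b ∧ p.2 0 = c}) := by
  have hclosed : IsClosed {p : ℝ × CSeq | p.1 ≤ b ∧ p.2 0 = c} :=
    (isClosed_le continuous_fst continuous_const).inter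
      ((isClosed_discrete {c}).preimage ((CSeq.continuous_apply 0).comp continuous_snd))
  refine ((isCompact_Icc (a := 0) (b := b)).prod
    (isCompact_setOf_forall_norm_fst_le fun k => max ‖c.1‖ (Real.exp^[k] b))).of_isClosed_subset
    (isClosed_modelJ.inter hclosed) ?_
  rintro p ⟨hp, hpb, hpc⟩
  refine ⟨⟨hp 0, hpb⟩, fun k => ?_⟩
  cases k with
  | zero => exact hpc ▸ le_max_left _ _
  | succ k => exact (norm_snd_le_of_mem_modelJ hp hpb k).trans (le_max_right _ _)

instance : WeaklyLocallyCompactSpace modelJ where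
  exists_compact_mem_nhds x := by
    refine ⟨Subtype.val ⁻¹' {p | p.1 ≤ x.1.1 + 1 ∧ p.2 0 = x.1.2 0}, ?_, ?_⟩
    · rw [Topology.IsEmbedding.subtypeVal.isCompact_iff, Subtype.image_preimage_coe]
      exact isCompact_modelJ_inter _ _
    · refine continuous_subtype_val.continuousAt.preimage_mem_nhds ?_
      exact (continuous_fst.continuousAt.eventually (eventually_le_nhds (lt_add_one _))).and
        (((CSeq.continuous_apply 0).comp continuous_snd).continuousAt
          ((isOpen_discrete {x.1.2 0}).mem_nhds rfl))

lemma isCountablyGenerated_cocompact (X : Type*) [TopologicalSpace X]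
    [WeaklyLocallyCompactSpace X] [SigmaCompactSpace X] : (cocompact X).IsCountablyGenerated := by
  let K := CompactExhaustion.choice X
  have hbasis : (cocompact X).HasBasis (fun _ : ℕ => True) fun n => (K n)ᶜ :=
    hasBasis_cocompact.to_hasBasis
      (fun _ ht => (K.exists_superset_of_isCompact ht).imp fun _ hn =>
        ⟨trivial, compl_subset_compl.2 hn⟩)
      fun n _ => ⟨K n, K.isCompact n, subset_rfl⟩
  exact hbasis.isCountablyGenerated

lemma OnePoint.firstCountableTopology (X : Type*) [TopologicalSpace X] [R1Space X]
    [FirstCountableTopology X] [(cocompact X).IsCountablyGenerated] :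
    FirstCountableTopology (OnePoint X) where
  nhds_generated_countable x := by
    induction x using OnePoint.rec with
    | infty => rw [OnePoint.nhds_infty_eq, coclosedCompact_eq_cocompact]; infer_instance
    | coe x => rw [OnePoint.nhds_coe_eq]; infer_instance

/-- (Properties of the cosine model space.) `J(ℱ)` with the
subspace topology is locally compact, Hausdorff and second countable; hence its
one-point compactification is first countable, and in particular sequential. -/
theorem modelJ_properties :
    LocallyCompactSpace ↥modelJ ∧ T2Space ↥modelJ ∧
      SecondCountableTopology ↥modelJ ∧
      FirstCountableTopology (OnePoint ↥modelJ) ∧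
      SequentialSpace (OnePoint ↥modelJ) := by
  have := isCountablyGenerated_cocompact modelJ
  have := OnePoint.firstCountableTopology modelJ
  exact ⟨inferInstance, inferInstance, inferInstance, inferInstance, inferInstance⟩
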